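/- arXiv:1204.4577 — 2 statements merged into one kernel-verified Lean document; each statement's English description precedes it below -/
import Mathlib

section
/- R(m,n) is a real number, and R(m,n) = mn + (1/2)·Σ_{i=1}^{m+n−1} (k_{i−1} − k_i)(ζ^i + ζ^{−i}). -/
/-! With `N = m + n`, summation by parts and `k₀ = 0`, `k_{N-1} = mn`, `ζ ^ N = 1` give
`R = mn + ∑_{i=1}^{N-1} (k_{i-1} - k_i) ζ^i`. Since `𝔉(m,n)` is invariant under `x ↦ mn - x`, its
enumeration satisfies `k_{N-1-i} = mn - k_i`, so the gaps `k_{i-1} - k_i` are invariant under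
`i ↦ N - i`; as `ζ ^ (N - i) = ζ⁻¹ ^ i`, this reindexing turns the sum into the same sum in `ζ⁻¹`.
Averaging the two gives the symmetric form, and `ζ ^ i + ζ⁻¹ ^ i = 2 Re ζ ^ i` because `‖ζ‖ = 1`. -/

open Finset

theorem StrictMono.apply_rev_eq_sub {N M : ℕ} {f : Fin N → ℕ} (hf : StrictMono f)
    (hle : ∀ i, f i ≤ M) (hsub : ∀ i, M - f i ∈ Set.range f) (i : Fin N) :
    f i.rev = M - f i := by
  -- `f` and `i ↦ M - f i.rev` are strictly increasing enumerations of the same finite set.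
  set g : Fin N → ℕ := fun i => M - f i.rev
  have hg : StrictMono g := fun i j hij => by
    show M - f i.rev < M - f j.rev
    have := hf (Fin.rev_lt_rev.mpr hij)
    have := hle i.rev
    omega
  have hrange : Set.range f = Set.range g := by
    ext x
    constructor
    · rintro ⟨i, rfl⟩
      obtain ⟨j, hj⟩ := hsub i
      exact ⟨j.rev, by simp [g, hj, Nat.sub_sub_self (hle i)]⟩
    · rintro ⟨i, rfl⟩
      exact hsub i.rev
  simpa [g] using congrFun ((hf.range_inj hg).mp hrange) i.rev

theorem sub_one_mul_sum_range_mul_pow {R : Type*} [CommRing R] (ζ : R) (a : ℕ → R) (N : ℕ) :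
    (ζ - 1) * ∑ i ∈ range (N + 1), a i * ζ ^ i =
      a N * ζ ^ (N + 1) - a 0 + ∑ i ∈ Icc 1 N, (a (i - 1) - a i) * ζ ^ i := by
  induction N with
  | zero => rw [sum_range_one, Icc_eq_empty (by omega), sum_empty]; ring
  | succ N ih =>
    rw [sum_range_succ, mul_add, ih, sum_Icc_succ_top (by omega), Nat.add_sub_cancel]
    ring

theorem pow_sub_eq_inv_pow {G : Type*} [GroupWithZero G] {ζ : G} {N i : ℕ} (hζ : ζ ^ N = 1)
    (hi : i ≤ N) : ζ ^ (N - i) = ζ⁻¹ ^ i := by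
  rw [inv_pow]
  exact eq_inv_of_mul_eq_one_left (by rw [← pow_add, Nat.sub_add_cancel hi, hζ])

theorem sum_Icc_mul_pow_eq_sum_mul_inv_pow {K : Type*} [DivisionRing K] {ζ : K} {N : ℕ}
    (hζ : ζ ^ N = 1) (c : ℕ → K) (hc : ∀ i ∈ Icc 1 (N - 1), c (N - i) = c i) :
    ∑ i ∈ Icc 1 (N - 1), c i * ζ ^ i = ∑ i ∈ Icc 1 (N - 1), c i * ζ⁻¹ ^ i := by
  have hζinv : ζ⁻¹ ^ N = 1 := by rw [inv_pow, hζ, inv_one]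
  refine sum_nbij' (N - ·) (N - ·) ?_ ?_ ?_ ?_ ?_
  all_goals intro i hi; simp only [mem_Icc] at hi ⊢
  any_goals omega
  rw [hc i (mem_Icc.mpr hi), pow_sub_eq_inv_pow hζinv (by omega), inv_inv]

theorem Complex.pow_add_inv_pow_eq_ofReal {ζ : ℂ} (hζ : ‖ζ‖ = 1) (i : ℕ) :
    ζ ^ i + ζ⁻¹ ^ i = ((2 * (ζ ^ i).re : ℝ) : ℂ) := by
  rw [Complex.inv_eq_conj hζ, ← map_pow, Complex.add_conj]

theorem dvd_or_dvd_mul_sub {m n x : ℕ} (h : (m ∣ x ∨ n ∣ x) ∧ x ≤ m * n) :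
    (m ∣ m * n - x ∨ n ∣ m * n - x) ∧ m * n - x ≤ m * n :=
  ⟨h.1.imp (Nat.dvd_sub (dvd_mul_right m n)) (Nat.dvd_sub (dvd_mul_left n m)), Nat.sub_le _ _⟩

structure EnumeratesMultiples (m n : ℕ) (k : ℕ → ℕ) : Prop where
  lt_of_lt : ∀ i j : ℕ, i < j → j < m + n → k i < k j
  mem_iff : ∀ x : ℕ, ((m ∣ x ∨ n ∣ x) ∧ x ≤ m * n) ↔ ∃ i < m + n, k i = x

namespace EnumeratesMultiples

variable {m n : ℕ} {k : ℕ → ℕ}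

theorem le_mul (hk : EnumeratesMultiples m n k) {i : ℕ} (hi : i < m + n) : k i ≤ m * n :=
  ((hk.mem_iff _).mpr ⟨i, hi, rfl⟩).2

theorem apply_zero (hk : EnumeratesMultiples m n k) : k 0 = 0 := by
  obtain ⟨j, hj, hkj⟩ := (hk.mem_iff 0).mp ⟨Or.inl (dvd_zero m), Nat.zero_le _⟩
  rcases Nat.eq_zero_or_pos j with rfl | hpos
  · exact hkj
  · have := hk.lt_of_lt 0 j hpos hj
    omega

theorem add_pos (hk : EnumeratesMultiples m n k) : 0 < m + n := by
  obtain ⟨j, hj, -⟩ := (hk.mem_iff 0).mp ⟨Or.inl (dvd_zero m), Nat.zero_le _⟩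
  omega

theorem apply_rev (hk : EnumeratesMultiples m n k) {i : ℕ} (hi : i < m + n) :
    k (m + n - 1 - i) = m * n - k i := by
  have hsub : ∀ i : Fin (m + n), m * n - k i ∈ Set.range fun j : Fin (m + n) => k j := by
    intro i
    obtain ⟨j, hj, hkj⟩ :=
      (hk.mem_iff _).mp (dvd_or_dvd_mul_sub ((hk.mem_iff _).mpr ⟨i, i.2, rfl⟩))
    exact ⟨⟨j, hj⟩, hkj⟩
  have := StrictMono.apply_rev_eq_sub (fun a b hab => hk.lt_of_lt a b hab b.2)
    (fun i => hk.le_mul i.2) hsub ⟨i, hi⟩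
  rwa [Fin.val_rev, show m + n - (i + 1) = m + n - 1 - i by omega] at this

theorem apply_last (hk : EnumeratesMultiples m n k) : k (m + n - 1) = m * n := by
  simpa [hk.apply_zero] using hk.apply_rev hk.add_pos

theorem sub_rev (hk : EnumeratesMultiples m n k) {i : ℕ} (hi : i ∈ Icc 1 (m + n - 1)) :
    (k (m + n - i - 1) : ℤ) - k (m + n - i) = k (i - 1) - k i := by
  rw [mem_Icc] at hi
  rw [show m + n - i - 1 = m + n - 1 - i by omega, show m + n - i = m + n - 1 - (i - 1) by omega,
    hk.apply_rev (by omega), hk.apply_rev (by omega)]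
  push_cast [hk.le_mul (show i < m + n by omega), hk.le_mul (show i - 1 < m + n by omega)]
  ring

theorem sub_one_mul_sum_mul_pow (hk : EnumeratesMultiples m n k) {K : Type*} [CommRing K]
    {ζ : K} (hζ : ζ ^ (m + n) = 1) :
    (ζ - 1) * ∑ i ∈ range (m + n), (k i : K) * ζ ^ i =
      m * n + ∑ i ∈ Icc 1 (m + n - 1), (((k (i - 1) : ℤ) - k i : ℤ) : K) * ζ ^ i := by
  obtain ⟨M, hM⟩ : ∃ M, m + n = M + 1 := ⟨m + n - 1, by have := hk.add_pos; omega⟩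
  rw [hM, sub_one_mul_sum_range_mul_pow, ← hM, hζ, show M = m + n - 1 by omega, hk.apply_last,
    hk.apply_zero]
  push_cast
  ring

theorem sum_mul_pow_eq_sum_mul_inv_pow (hk : EnumeratesMultiples m n k) {K : Type*}
    [DivisionRing K] {ζ : K} (hζ : ζ ^ (m + n) = 1) :
    ∑ i ∈ Icc 1 (m + n - 1), (((k (i - 1) : ℤ) - k i : ℤ) : K) * ζ ^ i =
      ∑ i ∈ Icc 1 (m + n - 1), (((k (i - 1) : ℤ) - k i : ℤ) : K) * ζ⁻¹ ^ i :=
  sum_Icc_mul_pow_eq_sum_mul_inv_pow hζ _ fun _ hi => congrArg _ (hk.sub_rev hi)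

end EnumeratesMultiples

theorem R_real_and_symmetric_form_general (m n : ℕ) (k : ℕ → ℕ)
    (hmono : ∀ i j : ℕ, i < j → j < m + n → k i < k j)
    (hmem : ∀ x : ℕ, ((m ∣ x ∨ n ∣ x) ∧ x ≤ m * n) ↔ ∃ i < m + n, k i = x)
    (d : ℕ) (hdvd : d ∣ m + n)
    (ζ : ℂ) (hζ : IsPrimitiveRoot ζ d)
    (R : ℂ) (hR : R = (ζ - 1) * ∑ i ∈ Finset.range (m + n), (k i : ℂ) * ζ ^ i) :
    (∃ r : ℝ, R = (r : ℂ)) ∧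
    R = (m : ℂ) * n + (1 / 2) * ∑ i ∈ Finset.Icc 1 (m + n - 1),
      (((k (i - 1) : ℤ) - (k i : ℤ) : ℤ) : ℂ) * (ζ ^ i + ζ⁻¹ ^ i) := by
  have hk : EnumeratesMultiples m n k := ⟨hmono, hmem⟩
  have hζN : ζ ^ (m + n) = 1 := (hζ.pow_eq_one_iff_dvd _).mpr hdvd
  have hformula : R = (m : ℂ) * n + (1 / 2) * ∑ i ∈ Icc 1 (m + n - 1),
      (((k (i - 1) : ℤ) - (k i : ℤ) : ℤ) : ℂ) * (ζ ^ i + ζ⁻¹ ^ i) := by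
    simp only [hR, hk.sub_one_mul_sum_mul_pow hζN, mul_add, sum_add_distrib,
      ← hk.sum_mul_pow_eq_sum_mul_inv_pow hζN]
    ring
  have hnorm : ‖ζ‖ = 1 := Complex.norm_eq_one_of_pow_eq_one hζN hk.add_pos.ne'
  refine ⟨⟨m * n + 1 / 2 * ∑ i ∈ Icc 1 (m + n - 1), ((k (i - 1) : ℝ) - k i) * (2 * (ζ ^ i).re),
    ?_⟩, hformula⟩
  simp only [hformula, Complex.pow_add_inv_pow_eq_ofReal hnorm]
  push_cast
  rfl

/-- Let `k` be the increasing enumeration of `𝔉(m,n)`,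
let `d ≥ 2` divide `m+n`, let `ζ` be a primitive `d`-th root of unity in
`ℂ`, and set `R(m,n) = (ζ - 1) * Σ_{i<m+n} k_i ζ^i`.  Then `R(m,n)` is a
real number and
`R(m,n) = mn + (1/2) Σ_{i=1}^{m+n-1} (k_{i-1} - k_i)(ζ^i + ζ^{-i})`. -/
theorem R_real_and_symmetric_form (m n : ℕ) (hm : 2 ≤ m) (hmn : m < n)
    (hcop : Nat.Coprime m n) (k : ℕ → ℕ)
    (hmono : ∀ i j : ℕ, i < j → j < m + n → k i < k j)
    (hmem : ∀ x : ℕ, ((m ∣ x ∨ n ∣ x) ∧ x ≤ m * n) ↔ ∃ i < m + n, k i = x)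
    (d : ℕ) (hd : 2 ≤ d) (hdvd : d ∣ m + n)
    (ζ : ℂ) (hζ : IsPrimitiveRoot ζ d)
    (R : ℂ) (hR : R = (ζ - 1) * ∑ i ∈ Finset.range (m + n), (k i : ℂ) * ζ ^ i) :
    (∃ r : ℝ, R = (r : ℂ)) ∧
    R = (m : ℂ) * n + (1 / 2) * ∑ i ∈ Finset.Icc 1 (m + n - 1),
      (((k (i - 1) : ℤ) - (k i : ℤ) : ℤ) : ℂ) * (ζ ^ i + ζ⁻¹ ^ i) :=
  R_real_and_symmetric_form_general m n k hmono hmem d hdvd ζ hζ R hR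
end

section
/- Set k'_i := k_i(m+n) − i·mn for i = 0, 1, …, m+n−1. Then k'_i + k'_{m+n−1−i} = mn for all i, one has k'_0 = 0 ≤ k'_i ≤ k'_{m+n−1} = mn, and the set {k'_i : i = 0, 1, …, m+n−1} consists of m+n distinct elements and equals 𝔉(m,n). -/
/-!
By inclusion–exclusion, the index of `x = k_i < mn` is `i = ⌊x/m⌋ + ⌊x/n⌋`, so
`k'_i = m (x mod n) + n (x mod m)`; as one of the two residues vanishes, `k'_i` lies in
`𝔉(m,n) ∩ [0, mn)`. Since `k'_i ≡ (m + n) k_i (mod mn)` with `m + n` prime to `mn`, the `k'_i` are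
distinct, hence by counting they exhaust `𝔉(m,n)`. The reflection `x ↦ mn - x` of `𝔉(m,n)`
reverses the enumeration, which gives `k'_i + k'_{m+n-1-i} = mn`.
-/

open Finset

def multiplesUnion (m n : ℕ) : Finset ℕ := {x ∈ range (m * n + 1) | m ∣ x ∨ n ∣ x}

def kPrime (m n : ℕ) (k : ℕ → ℕ) (i : ℕ) : ℤ :=
  (k i : ℤ) * ((m : ℤ) + n) - (i : ℤ) * ((m : ℤ) * n)

section Counting

variable {m n x : ℕ}

theorem mem_multiplesUnion : x ∈ multiplesUnion m n ↔ (m ∣ x ∨ n ∣ x) ∧ x ≤ m * n := by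
  simp [multiplesUnion, and_comm]

theorem zero_mem_multiplesUnion : 0 ∈ multiplesUnion m n :=
  mem_multiplesUnion.2 ⟨.inl (dvd_zero m), Nat.zero_le _⟩

theorem mul_mem_multiplesUnion : m * n ∈ multiplesUnion m n :=
  mem_multiplesUnion.2 ⟨.inl (dvd_mul_right m n), le_rfl⟩

theorem mul_sub_mem_multiplesUnion (hx : x ∈ multiplesUnion m n) :
    m * n - x ∈ multiplesUnion m n := by
  obtain ⟨hdvd | hdvd, -⟩ := mem_multiplesUnion.1 hx
  · exact mem_multiplesUnion.2 ⟨.inl (Nat.dvd_sub (dvd_mul_right m n) hdvd), Nat.sub_le _ _⟩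
  · exact mem_multiplesUnion.2 ⟨.inr (Nat.dvd_sub (dvd_mul_left n m) hdvd), Nat.sub_le _ _⟩

theorem card_filter_dvd_range_succ (d y : ℕ) : #{x ∈ range (y + 1) | d ∣ x} = y / d + 1 := by
  have h : range (y + 1) = insert 0 (Ioc 0 y) := by
    ext x; simp only [mem_range, mem_insert, mem_Ioc]; omega
  rw [h, filter_insert, if_pos (dvd_zero d), card_insert_of_notMem (by simp),
    Nat.Ioc_filter_dvd_card_eq_div]

theorem card_filter_le_multiplesUnion (hcop : m.Coprime n) (hx : x < m * n) :
    #{y ∈ multiplesUnion m n | y ≤ x} = x / m + x / n + 1 := by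
  have hfilter : {y ∈ multiplesUnion m n | y ≤ x} =
      {y ∈ range (x + 1) | m ∣ y} ∪ {y ∈ range (x + 1) | n ∣ y} := by
    ext y
    simp only [mem_filter, mem_union, mem_multiplesUnion, mem_range]
    constructor
    · rintro ⟨⟨hdvd, -⟩, hy⟩
      exact hdvd.imp (⟨by omega, ·⟩) (⟨by omega, ·⟩)
    · rintro (⟨hy, hdvd⟩ | ⟨hy, hdvd⟩) <;> simp [hdvd] <;> omega
  have hinter : {y ∈ range (x + 1) | m ∣ y} ∩ {y ∈ range (x + 1) | n ∣ y} = {0} := by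
    ext y
    simp only [mem_inter, mem_filter, mem_range, mem_singleton]
    constructor
    · rintro ⟨⟨hy, hm⟩, -, hn⟩
      exact Nat.eq_zero_of_dvd_of_lt (hcop.mul_dvd_of_dvd_of_dvd hm hn) (by omega)
    · rintro rfl
      simp
  have := card_union_add_card_inter {y ∈ range (x + 1) | m ∣ y} {y ∈ range (x + 1) | n ∣ y}
  rw [hinter, card_singleton, card_filter_dvd_range_succ, card_filter_dvd_range_succ] at this
  rw [hfilter]
  omega

theorem mem_image_natCast_multiplesUnion {x : ℤ} :
    x ∈ (multiplesUnion m n).image (Nat.cast : ℕ → ℤ) ↔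
      ((m : ℤ) ∣ x ∨ (n : ℤ) ∣ x) ∧ 0 ≤ x ∧ x ≤ (m : ℤ) * n := by
  constructor
  · intro hx
    obtain ⟨y, hy, rfl⟩ := mem_image.1 hx
    obtain ⟨hdvd, hle⟩ := mem_multiplesUnion.1 hy
    simp only [Int.natCast_dvd_natCast, Nat.cast_nonneg, true_and]
    exact ⟨hdvd, by exact_mod_cast hle⟩
  · rintro ⟨hdvd, h0, hle⟩
    lift x to ℕ using h0
    simp only [Int.natCast_dvd_natCast] at hdvd
    exact mem_image_of_mem _ (mem_multiplesUnion.2 ⟨hdvd, by exact_mod_cast hle⟩)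

theorem dvd_or_dvd_mul_mod_add_mul_mod (hx : m ∣ x ∨ n ∣ x) :
    m ∣ m * (x % n) + n * (x % m) ∨ n ∣ m * (x % n) + n * (x % m) := by
  rcases hx with hx | hx
  · simp [Nat.mod_eq_zero_of_dvd hx]
  · simp [Nat.mod_eq_zero_of_dvd hx]

theorem mul_mod_add_mul_mod_lt (hx : m ∣ x ∨ n ∣ x) (hmn : 0 < m * n) :
    m * (x % n) + n * (x % m) < m * n := by
  have hm := Nat.pos_of_mul_pos_right hmn
  have hn := Nat.pos_of_mul_pos_left hmn
  rcases hx with hx | hx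
  · simpa [Nat.mod_eq_zero_of_dvd hx] using Nat.mul_lt_mul_of_pos_left (Nat.mod_lt x hn) hm
  · simpa [Nat.mod_eq_zero_of_dvd hx, mul_comm m n] using
      Nat.mul_lt_mul_of_pos_left (Nat.mod_lt x hm) hn

theorem Nat.Coprime.mul_coprime_add (hcop : m.Coprime n) : (m * n).Coprime (m + n) :=
  Nat.Coprime.mul_left (Nat.coprime_self_add_right.2 hcop)
    (Nat.coprime_add_self_right.2 hcop.symm)

end Counting

section StrictMonoOn

variable {N : ℕ} {f g : ℕ → ℕ}

theorem StrictMonoOn.filter_le_image_range (hf : StrictMonoOn f (Set.Iio N)) {i : ℕ}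
    (hi : i < N) : {y ∈ (range N).image f | y ≤ f i} = (range (i + 1)).image f := by
  ext y
  simp only [mem_filter, mem_image, mem_range]
  constructor
  · rintro ⟨⟨j, hj, rfl⟩, hji⟩
    exact ⟨j, Nat.lt_succ_of_le ((hf.le_iff_le hj hi).1 hji), rfl⟩
  · rintro ⟨j, hj, rfl⟩
    exact ⟨⟨j, by omega, rfl⟩, (hf.le_iff_le (by simp; omega) hi).2 (by omega)⟩

theorem StrictMonoOn.card_filter_le_image_range (hf : StrictMonoOn f (Set.Iio N)) {i : ℕ}
    (hi : i < N) : #{y ∈ (range N).image f | y ≤ f i} = i + 1 := by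
  rw [hf.filter_le_image_range hi, card_image_of_injOn, card_range]
  exact hf.injOn.mono fun j hj => by simp at hj ⊢; omega

theorem StrictMonoOn.eqOn_of_image_range_eq (hf : StrictMonoOn f (Set.Iio N))
    (hg : StrictMonoOn g (Set.Iio N)) (h : (range N).image f = (range N).image g) :
    Set.EqOn f g (Set.Iio N) := by
  have hf' : StrictMono fun i : Fin N => f i := fun i j hij => hf i.2 j.2 hij
  have hg' : StrictMono fun i : Fin N => g i := fun i j hij => hg i.2 j.2 hij
  have hfin := (hf'.range_inj hg').1 <| by
    ext y
    simpa [Fin.exists_iff] using congrArg (y ∈ ·) h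
  exact fun i hi => congrFun hfin ⟨i, hi⟩

end StrictMonoOn

section Enumeration

variable {m n : ℕ} {k : ℕ → ℕ}

theorem enum_mem (himage : (range (m + n)).image k = multiplesUnion m n) {i : ℕ}
    (hi : i < m + n) : k i ∈ multiplesUnion m n :=
  himage ▸ mem_image_of_mem k (mem_range.2 hi)

theorem exists_enum_eq (himage : (range (m + n)).image k = multiplesUnion m n) {x : ℕ}
    (hx : x ∈ multiplesUnion m n) : ∃ i < m + n, k i = x := by
  simpa [← himage] using hx

theorem enum_zero (hk : StrictMonoOn k (Set.Iio (m + n)))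
    (himage : (range (m + n)).image k = multiplesUnion m n) : k 0 = 0 := by
  obtain ⟨i, hi, hki⟩ := exists_enum_eq himage zero_mem_multiplesUnion
  rcases Nat.eq_zero_or_pos i with rfl | hpos
  · exact hki
  · exact absurd (hk (by simp; omega) hi hpos) (by omega)

theorem enum_last (hk : StrictMonoOn k (Set.Iio (m + n)))
    (himage : (range (m + n)).image k = multiplesUnion m n) : k (m + n - 1) = m * n := by
  obtain ⟨i, hi, hki⟩ := exists_enum_eq himage mul_mem_multiplesUnion
  have hle := (mem_multiplesUnion.1 (enum_mem himage (i := m + n - 1) (by omega))).2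
  rcases (Nat.le_sub_one_of_lt hi).eq_or_lt with rfl | hlt
  · exact hki
  · exact absurd (hk (by simp; omega) (by simp; omega) hlt) (by omega)

theorem enum_lt_of_lt_last (hk : StrictMonoOn k (Set.Iio (m + n)))
    (himage : (range (m + n)).image k = multiplesUnion m n) {i : ℕ} (hi : i < m + n - 1) :
    k i < m * n :=
  enum_last hk himage ▸ hk (by simp; omega) (by simp; omega) hi

theorem enum_rev (hk : StrictMonoOn k (Set.Iio (m + n)))
    (himage : (range (m + n)).image k = multiplesUnion m n) {i : ℕ} (hi : i < m + n) :
    k (m + n - 1 - i) = m * n - k i := by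
  have hle : ∀ j < m + n, k j ≤ m * n := fun j hj => (mem_multiplesUnion.1 (enum_mem himage hj)).2
  have hrev : StrictMonoOn (fun j => m * n - k (m + n - 1 - j)) (Set.Iio (m + n)) := by
    intro a ha b hb hab
    simp only [Set.mem_Iio] at ha hb
    have hlt : k (m + n - 1 - b) < k (m + n - 1 - a) :=
      hk (show m + n - 1 - b < m + n by omega) (show m + n - 1 - a < m + n by omega) (by omega)
    have := hle (m + n - 1 - a) (by omega)
    show m * n - k (m + n - 1 - a) < m * n - k (m + n - 1 - b)
    omega
  have himage_rev : (range (m + n)).image (fun j => m * n - k (m + n - 1 - j)) =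
      (range (m + n)).image k := by
    rw [himage]
    ext y
    simp only [mem_image, mem_range]
    constructor
    · rintro ⟨j, hj, rfl⟩
      exact mul_sub_mem_multiplesUnion (enum_mem himage (by omega))
    · intro hy
      obtain ⟨l, hl, hkl⟩ := exists_enum_eq himage (mul_sub_mem_multiplesUnion hy)
      refine ⟨m + n - 1 - l, by omega, ?_⟩
      rw [show m + n - 1 - (m + n - 1 - l) = l by omega, hkl]
      have := (mem_multiplesUnion.1 hy).2
      omega
  have hrev_i : m * n - k (m + n - 1 - i) = k i := hrev.eqOn_of_image_range_eq hk himage_rev hi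
  have := hle (m + n - 1 - i) (by omega)
  omega

theorem enum_index_eq (hcop : m.Coprime n) (hk : StrictMonoOn k (Set.Iio (m + n)))
    (himage : (range (m + n)).image k = multiplesUnion m n) {i : ℕ} (hi : i < m + n - 1) :
    i = k i / m + k i / n := by
  have h := hk.card_filter_le_image_range (i := i) (by omega)
  rw [himage, card_filter_le_multiplesUnion hcop (enum_lt_of_lt_last hk himage hi)] at h
  omega

end Enumeration

section KPrime

variable {m n : ℕ} {k : ℕ → ℕ}

theorem kPrime_zero (hk : StrictMonoOn k (Set.Iio (m + n)))
    (himage : (range (m + n)).image k = multiplesUnion m n) : kPrime m n k 0 = 0 := by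
  simp [kPrime, enum_zero hk himage]

theorem kPrime_last (hk : StrictMonoOn k (Set.Iio (m + n)))
    (himage : (range (m + n)).image k = multiplesUnion m n) :
    kPrime m n k (m + n - 1) = m * n := by
  obtain ⟨i, hi, -⟩ := exists_enum_eq himage zero_mem_multiplesUnion
  have hcast : ((m + n - 1 : ℕ) : ℤ) = m + n - 1 := by omega
  rw [kPrime, enum_last hk himage, hcast]
  push_cast
  ring

theorem kPrime_add_kPrime_rev (hk : StrictMonoOn k (Set.Iio (m + n)))
    (himage : (range (m + n)).image k = multiplesUnion m n) {i : ℕ} (hi : i < m + n) :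
    kPrime m n k i + kPrime m n k (m + n - 1 - i) = m * n := by
  have hcast : ((m + n - 1 - i : ℕ) : ℤ) = m + n - 1 - i := by omega
  rw [kPrime, kPrime, enum_rev hk himage hi, hcast,
    Nat.cast_sub (mem_multiplesUnion.1 (enum_mem himage hi)).2]
  push_cast
  ring

theorem kPrime_eq_of_lt_last (hcop : m.Coprime n) (hk : StrictMonoOn k (Set.Iio (m + n)))
    (himage : (range (m + n)).image k = multiplesUnion m n) {i : ℕ} (hi : i < m + n - 1) :
    kPrime m n k i = ((m * (k i % n) + n * (k i % m) : ℕ) : ℤ) := by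
  have hidx := congrArg (Nat.cast : ℕ → ℤ) (enum_index_eq hcop hk himage hi)
  have hdivm := congrArg (Nat.cast : ℕ → ℤ) (Nat.div_add_mod (k i) m)
  have hdivn := congrArg (Nat.cast : ℕ → ℤ) (Nat.div_add_mod (k i) n)
  push_cast at hidx hdivm hdivn ⊢
  rw [kPrime, hidx]
  linear_combination -(n : ℤ) * hdivm - (m : ℤ) * hdivn

theorem exists_kPrime_eq_of_lt_last (hcop : m.Coprime n) (hk : StrictMonoOn k (Set.Iio (m + n)))
    (himage : (range (m + n)).image k = multiplesUnion m n) {i : ℕ} (hi : i < m + n - 1) :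
    ∃ v ∈ multiplesUnion m n, v < m * n ∧ kPrime m n k i = v := by
  have hdvd := (mem_multiplesUnion.1 (enum_mem himage (i := i) (by omega))).1
  have hlt := mul_mod_add_mul_mod_lt hdvd (by have := enum_lt_of_lt_last hk himage hi; omega)
  exact ⟨_, mem_multiplesUnion.2 ⟨dvd_or_dvd_mul_mod_add_mul_mod hdvd, hlt.le⟩, hlt,
    kPrime_eq_of_lt_last hcop hk himage hi⟩

-- `kPrime m n k i ≡ (m + n) * k i [ZMOD m * n]`, and `m + n` is a unit modulo `m * n`.
theorem kPrime_injOn_lt_last (hcop : m.Coprime n) (hk : StrictMonoOn k (Set.Iio (m + n)))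
    (himage : (range (m + n)).image k = multiplesUnion m n) :
    Set.InjOn (kPrime m n k) (Set.Iio (m + n - 1)) := by
  intro i hi j hj h
  simp only [Set.mem_Iio] at hi hj
  have hdvd : ((m * n : ℕ) : ℤ) ∣ ((m + n : ℕ) : ℤ) * ((k i : ℤ) - k j) :=
    ⟨i - j, by simp only [kPrime] at h; push_cast; linear_combination h⟩
  have hdvd' := (Nat.isCoprime_iff_coprime.2 hcop.mul_coprime_add).dvd_of_dvd_mul_left hdvd
  have hki := enum_lt_of_lt_last hk himage hi
  have hkj := enum_lt_of_lt_last hk himage hj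
  have hsub : (k i : ℤ) - k j = 0 :=
    Int.eq_zero_of_abs_lt_dvd hdvd' (by rw [abs_lt]; push_cast; omega)
  exact hk.injOn (show i < m + n by omega) (show j < m + n by omega) (by omega)

theorem kPrime_injOn (hcop : m.Coprime n) (hk : StrictMonoOn k (Set.Iio (m + n)))
    (himage : (range (m + n)).image k = multiplesUnion m n) :
    Set.InjOn (kPrime m n k) (Set.Iio (m + n)) := by
  have hlast : ∀ i < m + n - 1, kPrime m n k i ≠ kPrime m n k (m + n - 1) := by
    intro i hi h
    obtain ⟨v, -, hv, hkv⟩ := exists_kPrime_eq_of_lt_last hcop hk himage hi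
    rw [kPrime_last hk himage, hkv] at h
    exact hv.ne (by exact_mod_cast h)
  intro i hi j hj h
  simp only [Set.mem_Iio] at hi hj
  rcases Nat.lt_or_ge i (m + n - 1), Nat.lt_or_ge j (m + n - 1) with ⟨hi' | hi', hj' | hj'⟩
  · exact kPrime_injOn_lt_last hcop hk himage hi' hj' h
  · exact absurd (show j = m + n - 1 by omega ▸ h) (hlast i hi')
  · exact absurd (show i = m + n - 1 by omega ▸ h.symm) (hlast j hj')
  · omega

theorem image_kPrime (hcop : m.Coprime n) (hk : StrictMonoOn k (Set.Iio (m + n)))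
    (himage : (range (m + n)).image k = multiplesUnion m n) :
    (range (m + n)).image (kPrime m n k) = (multiplesUnion m n).image (Nat.cast : ℕ → ℤ) := by
  refine eq_of_subset_of_card_le (fun y hy => ?_) ?_
  · obtain ⟨i, hi, rfl⟩ := mem_image.1 hy
    rw [mem_range] at hi
    rcases Nat.lt_or_ge i (m + n - 1) with hi' | hi'
    · obtain ⟨v, hv, -, hkv⟩ := exists_kPrime_eq_of_lt_last hcop hk himage hi'
      exact hkv ▸ mem_image_of_mem _ hv
    · rw [show i = m + n - 1 by omega, kPrime_last hk himage]
      exact_mod_cast mem_image_of_mem _ mul_mem_multiplesUnion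
  · rw [card_image_of_injective _ Nat.cast_injective, ← himage,
      card_image_of_injOn (by simpa using hk.injOn),
      card_image_of_injOn (by simpa using kPrime_injOn hcop hk himage)]

end KPrime

theorem kprime_properties_general (m n : ℕ)
    (hcop : Nat.Coprime m n) (k : ℕ → ℕ)
    (hmono : ∀ i j : ℕ, i < j → j < m + n → k i < k j)
    (hmem : ∀ x : ℕ, ((m ∣ x ∨ n ∣ x) ∧ x ≤ m * n) ↔ ∃ i < m + n, k i = x)
    (k' : ℕ → ℤ)
    (hk' : ∀ i, k' i = (k i : ℤ) * ((m : ℤ) + n) - (i : ℤ) * ((m : ℤ) * n)) :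
    (∀ i < m + n, k' i + k' (m + n - 1 - i) = (m : ℤ) * n) ∧
    k' 0 = 0 ∧
    (∀ i < m + n, 0 ≤ k' i ∧ k' i ≤ (m : ℤ) * n) ∧
    k' (m + n - 1) = (m : ℤ) * n ∧
    (∀ i j, i < m + n → j < m + n → k' i = k' j → i = j) ∧
    (∀ x : ℤ, (∃ i < m + n, k' i = x) ↔
      (((m : ℤ) ∣ x ∨ (n : ℤ) ∣ x) ∧ 0 ≤ x ∧ x ≤ (m : ℤ) * n)) := by
  obtain rfl : k' = kPrime m n k := funext hk'
  have hk : StrictMonoOn k (Set.Iio (m + n)) := fun i _ j hj hij => hmono i j hij hj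
  have himage : (range (m + n)).image k = multiplesUnion m n := by
    ext x
    simp [mem_multiplesUnion, hmem]
  have hvalues (x : ℤ) : (∃ i < m + n, kPrime m n k i = x) ↔
      ((m : ℤ) ∣ x ∨ (n : ℤ) ∣ x) ∧ 0 ≤ x ∧ x ≤ (m : ℤ) * n := by
    simpa using (Finset.ext_iff.1 (image_kPrime hcop hk himage) x).trans
      mem_image_natCast_multiplesUnion
  refine ⟨fun i hi => kPrime_add_kPrime_rev hk himage hi, kPrime_zero hk himage,
    fun i hi => ((hvalues _).1 ⟨i, hi, rfl⟩).2, kPrime_last hk himage,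
    fun i j hi hj => kPrime_injOn hcop hk himage hi hj, hvalues⟩

/-- Let `k` be the increasing enumeration of `𝔉(m,n)`
and set `k' i = k i * (m+n) - i * m * n` (in `ℤ`).  Then
`k' i + k' (m+n-1-i) = mn`, `k' 0 = 0 ≤ k' i ≤ k' (m+n-1) = mn`, the
values `k' 0, …, k' (m+n-1)` are pairwise distinct, and the set of these
values equals `𝔉(m,n)`. -/
theorem kprime_properties (m n : ℕ) (hm : 2 ≤ m) (hmn : m < n)
    (hcop : Nat.Coprime m n) (k : ℕ → ℕ)
    (hmono : ∀ i j : ℕ, i < j → j < m + n → k i < k j)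
    (hmem : ∀ x : ℕ, ((m ∣ x ∨ n ∣ x) ∧ x ≤ m * n) ↔ ∃ i < m + n, k i = x)
    (k' : ℕ → ℤ)
    (hk' : ∀ i, k' i = (k i : ℤ) * ((m : ℤ) + n) - (i : ℤ) * ((m : ℤ) * n)) :
    (∀ i < m + n, k' i + k' (m + n - 1 - i) = (m : ℤ) * n) ∧
    k' 0 = 0 ∧
    (∀ i < m + n, 0 ≤ k' i ∧ k' i ≤ (m : ℤ) * n) ∧
    k' (m + n - 1) = (m : ℤ) * n ∧
    (∀ i j, i < m + n → j < m + n → k' i = k' j → i = j) ∧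
    (∀ x : ℤ, (∃ i < m + n, k' i = x) ↔
      (((m : ℤ) ∣ x ∨ (n : ℤ) ∣ x) ∧ 0 ≤ x ∧ x ≤ (m : ℤ) * n)) :=
  kprime_properties_general m n hcop k hmono hmem k' hk'
end
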